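/- arXiv:2101.09636 — 2 statements merged into one kernel-verified Lean document; each statement's English description precedes it below -/
import Mathlib

section
/- If S is a p'-valenced scheme (p ∤ k_i for all i), then e = Σ_{i=0}^d (k_i mod p)^{-1} E_i^* J E_i^* is the identity element of the algebra B_0 and is a central element of the Terwilliger algebra T. -/
open Matrix

/-- An association scheme of class `d` on a finite set `X`: every pair is assigned a
relation index `r x y ∈ [0,d]`, relation `0` is the diagonal, there is a transpose
involution `inv`, each relation is attained, and the intersection numbers
`p i j ℓ = |{z : (x,z) ∈ R_i, (z,y) ∈ R_j}|` depend only on `ℓ = r x y`. -/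
structure AssocScheme (X : Type*) [Fintype X] [DecidableEq X] (d : ℕ) where
  r : X → X → Fin (d + 1)
  r_diag : ∀ x y : X, r x y = 0 ↔ x = y
  inv : Fin (d + 1) → Fin (d + 1)
  r_symm : ∀ x y : X, r y x = inv (r x y)
  p : Fin (d + 1) → Fin (d + 1) → Fin (d + 1) → ℕ
  card_p : ∀ (i j : Fin (d + 1)) (x y : X),
    (Finset.univ.filter fun z : X => r x z = i ∧ r z y = j).card = p i j (r x y)
  surj : ∀ i : Fin (d + 1), ∃ x y : X, r x y = i

namespace AssocScheme

variable {X : Type*} [Fintype X] [DecidableEq X] {d : ℕ}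

/-- The valency `k_i = p_{i i'}^0` of the relation `R_i`. -/
def k (S : AssocScheme X d) (i : Fin (d + 1)) : ℕ := S.p i (S.inv i) 0

variable (F : Type*) [Field F]

/-- The adjacency matrix of the relation `R_j` over `F`. -/
def adjM (S : AssocScheme X d) (j : Fin (d + 1)) : Matrix X X F :=
  Matrix.of fun y z => if S.r y z = j then 1 else 0

/-- The dual idempotent `E_i^*` with respect to the base point `x`. -/
def dualIdem (S : AssocScheme X d) (x : X) (i : Fin (d + 1)) : Matrix X X F :=
  Matrix.of fun y z => if y = z ∧ S.r x y = i then 1 else 0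

/-- The all-one matrix `J`. -/
def Jmat : Matrix X X F := Matrix.of fun _ _ => 1

/-- The (modular) Terwilliger algebra of `S` with respect to `x`. -/
def terw (S : AssocScheme X d) (x : X) : Subalgebra F (Matrix X X F) :=
  Algebra.adjoin F (Set.range (S.adjM F) ∪ Set.range (S.dualIdem F x))

/-- The primary module `W_0 = span_F {E_i^* 𝟏 : i ∈ [0,d]}`. -/
def W0 (S : AssocScheme X d) (x : X) : Submodule F (X → F) :=
  Submodule.span F (Set.range fun i : Fin (d + 1) => S.dualIdem F x i *ᵥ (1 : X → F))

/-- `B_0 = span_F {E_i^* J E_j^* : i,j ∈ [0,d]}`. -/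
def B0 (S : AssocScheme X d) (x : X) : Submodule F (Matrix X X F) :=
  Submodule.span F (Set.range fun q : Fin (d + 1) × Fin (d + 1) =>
    S.dualIdem F x q.1 * Jmat F * S.dualIdem F x q.2)

/-- `B_1 = span_F {E_i^* J E_j^* : p ∣ k_i k_j}`. -/
def B1 (p : ℕ) (S : AssocScheme X d) (x : X) : Submodule F (Matrix X X F) :=
  Submodule.span F {Z : Matrix X X F | ∃ i j : Fin (d + 1),
    p ∣ S.k i * S.k j ∧ Z = S.dualIdem F x i * Jmat F * S.dualIdem F x j}

/-- The candidate identity element `e = Σ_i (k_i)⁻¹ E_i^* J E_i^*` of `B_0`. -/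
def eB0 (S : AssocScheme X d) (x : X) : Matrix X X F :=
  ∑ i : Fin (d + 1), (S.k i : F)⁻¹ • (S.dualIdem F x i * Jmat F * S.dualIdem F x i)


section Aux

set_option linter.unusedSectionVars false

variable (S : AssocScheme X d) (x : X)

lemma inv_inv (i : Fin (d + 1)) : S.inv (S.inv i) = i := by
  obtain ⟨a, b, hab⟩ := S.surj i
  have h1 := S.r_symm a b
  have h2 := S.r_symm b a
  rw [hab] at h1
  rw [h1, hab] at h2
  exact h2.symm

lemma r_flip (b : Fin (d + 1)) (w z : X) : S.r w z = b ↔ S.r z w = S.inv b := by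
  constructor
  · intro h; rw [S.r_symm w z, h]
  · intro h
    have h2 := S.r_symm z w
    rw [h, S.inv_inv] at h2
    exact h2

lemma card_r (i : Fin (d + 1)) :
    (Finset.univ.filter fun z : X => S.r x z = i).card = S.k i := by
  have h := S.card_p i (S.inv i) x x
  rw [(S.r_diag x x).mpr rfl] at h
  unfold k
  rw [← h]
  congr 1
  ext z
  simp only [Finset.mem_filter, Finset.mem_univ, true_and]
  exact ⟨fun hz => ⟨hz, (S.r_flip i x z).mp hz⟩, fun h => h.1⟩

lemma sum_ite_card {α : Type*} [NonAssocSemiring α] (P : X → Prop) [DecidablePred P] (c : α) :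
    ∑ w : X, (if P w then c else 0) = ((Finset.univ.filter P).card : α) * c := by
  rw [Finset.sum_ite, Finset.sum_const, Finset.sum_const_zero, add_zero, nsmul_eq_mul]

lemma key_count (a b c : Fin (d + 1)) :
    S.k c * S.p a b c = S.k a * S.p c (S.inv b) a := by
  obtain ⟨x, -, -⟩ := S.surj 0
  have e1 : ∀ z : X, (∑ w : X, if S.r x z = c ∧ S.r x w = a ∧ S.r w z = b then (1 : ℕ) else 0)
      = if S.r x z = c then S.p a b c else 0 := by
    intro z
    by_cases h : S.r x z = c
    · have hc := S.card_p a b x z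
      rw [h] at hc
      simp only [h, true_and, if_true]
      rw [← hc, Finset.card_filter]
    · simp [h]
  have e2 : ∀ w : X, (∑ z : X, if S.r x z = c ∧ S.r x w = a ∧ S.r w z = b then (1 : ℕ) else 0)
      = if S.r x w = a then S.p c (S.inv b) a else 0 := by
    intro w
    by_cases h : S.r x w = a
    · have hc := S.card_p c (S.inv b) x w
      rw [h] at hc
      simp only [h, true_and, if_true]
      rw [← hc, Finset.card_filter]
      exact Finset.sum_congr rfl fun z _ => by simp [S.r_flip b w z]
    · simp [h]
  calc S.k c * S.p a b c
      = ∑ z : X, (if S.r x z = c then S.p a b c else 0) := by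
        rw [sum_ite_card, Nat.cast_id, S.card_r x]
    _ = ∑ z : X, ∑ w : X, (if S.r x z = c ∧ S.r x w = a ∧ S.r w z = b then 1 else 0) :=
        (Finset.sum_congr rfl fun z _ => (e1 z).symm)
    _ = ∑ w : X, ∑ z : X, (if S.r x z = c ∧ S.r x w = a ∧ S.r w z = b then 1 else 0) :=
        Finset.sum_comm
    _ = ∑ w : X, (if S.r x w = a then S.p c (S.inv b) a else 0) :=
        Finset.sum_congr rfl fun w _ => e2 w
    _ = S.k a * S.p c (S.inv b) a := by
        rw [sum_ite_card, Nat.cast_id, S.card_r x]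

variable {F : Type*} [Field F]

lemma EJE_apply (i j : Fin (d + 1)) (y z : X) :
    ((S.dualIdem F x i * Jmat F * S.dualIdem F x j : Matrix X X F) y z)
      = if S.r x y = i ∧ S.r x z = j then 1 else 0 := by
  simp [Matrix.mul_apply, dualIdem, Jmat, ite_and, mul_ite, ite_mul,
    Finset.sum_ite_eq, Finset.sum_ite_eq']
  split_ifs <;> rfl

lemma eB0_apply (y z : X) :
    eB0 F S x y z = if S.r x y = S.r x z then (S.k (S.r x y) : F)⁻¹ else 0 := by
  simp only [eB0, Matrix.sum_apply, Matrix.smul_apply, EJE_apply, smul_eq_mul,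
    mul_ite, mul_one, mul_zero]
  rw [Finset.sum_eq_single (S.r x y)]
  · by_cases h : S.r x y = S.r x z
    · simp [h.symm]
    · simp [h, Ne.symm h]
  · intro i _ hi
    exact if_neg fun hh => hi hh.1.symm
  · simp

lemma key_field (p : ℕ) [Fact p.Prime] [CharP F p] (hk : ∀ i : Fin (d + 1), ¬ p ∣ S.k i)
    (a b c : Fin (d + 1)) :
    (S.k a : F)⁻¹ * (S.p a b c : F) = (S.k c : F)⁻¹ * (S.p c (S.inv b) a : F) := by
  have ha : (S.k a : F) ≠ 0 := by
    simpa [CharP.cast_eq_zero_iff F p] using hk a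
  have hc : (S.k c : F) ≠ 0 := by
    simpa [CharP.cast_eq_zero_iff F p] using hk c
  have hnat : S.p a b c * S.k c = S.p c (S.inv b) a * S.k a := by
    rw [Nat.mul_comm, S.key_count a b c, Nat.mul_comm]
  rw [inv_mul_eq_div, inv_mul_eq_div, div_eq_div_iff ha hc]
  exact_mod_cast congrArg (Nat.cast : ℕ → F) hnat

lemma kcast_ne (p : ℕ) [Fact p.Prime] [CharP F p] (hk : ∀ i : Fin (d + 1), ¬ p ∣ S.k i)
    (a : Fin (d + 1)) : (S.k a : F) ≠ 0 := by
  simpa [CharP.cast_eq_zero_iff F p] using hk a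

lemma eB0_mul_EJE (p : ℕ) [Fact p.Prime] [CharP F p] (hk : ∀ i : Fin (d + 1), ¬ p ∣ S.k i)
    (i j : Fin (d + 1)) :
    eB0 F S x * (S.dualIdem F x i * Jmat F * S.dualIdem F x j)
      = (S.dualIdem F x i * Jmat F * S.dualIdem F x j : Matrix X X F) := by
  ext y z
  rw [Matrix.mul_apply]
  have step : ∀ w : X, eB0 F S x y w
        * ((S.dualIdem F x i * Jmat F * S.dualIdem F x j : Matrix X X F) w z)
      = if S.r x w = S.r x y then
          (if S.r x y = i ∧ S.r x z = j then (S.k (S.r x y) : F)⁻¹ else 0) else 0 := by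
    intro w
    rw [eB0_apply, EJE_apply]
    split_ifs <;> simp_all
  rw [Finset.sum_congr rfl fun w _ => step w, sum_ite_card, S.card_r x, EJE_apply]
  by_cases h : S.r x y = i ∧ S.r x z = j
  · simp [h, mul_inv_cancel₀ (S.kcast_ne (F := F) p hk i)]
  · simp [h]

lemma EJE_mul_eB0 (p : ℕ) [Fact p.Prime] [CharP F p] (hk : ∀ i : Fin (d + 1), ¬ p ∣ S.k i)
    (i j : Fin (d + 1)) :
    (S.dualIdem F x i * Jmat F * S.dualIdem F x j) * eB0 F S x
      = (S.dualIdem F x i * Jmat F * S.dualIdem F x j : Matrix X X F) := by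
  ext y z
  rw [Matrix.mul_apply]
  have step : ∀ w : X, ((S.dualIdem F x i * Jmat F * S.dualIdem F x j : Matrix X X F) y w)
        * eB0 F S x w z
      = if S.r x w = S.r x z then
          (if S.r x y = i ∧ S.r x z = j then (S.k (S.r x z) : F)⁻¹ else 0) else 0 := by
    intro w
    rw [eB0_apply, EJE_apply]
    split_ifs <;> simp_all
  rw [Finset.sum_congr rfl fun w _ => step w, sum_ite_card, S.card_r x, EJE_apply]
  by_cases h : S.r x y = i ∧ S.r x z = j
  · simp [h, mul_inv_cancel₀ (S.kcast_ne (F := F) p hk j)]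
  · simp [h]

lemma eB0_comm_adjM (p : ℕ) [Fact p.Prime] [CharP F p] (hk : ∀ i : Fin (d + 1), ¬ p ∣ S.k i)
    (b : Fin (d + 1)) :
    eB0 F S x * S.adjM F b = S.adjM F b * eB0 F S x := by
  ext y z
  rw [Matrix.mul_apply, Matrix.mul_apply]
  have stepL : ∀ w : X, eB0 F S x y w * S.adjM F b w z
      = if S.r x w = S.r x y ∧ S.r w z = b then (S.k (S.r x y) : F)⁻¹ else 0 := by
    intro w
    rw [eB0_apply]
    simp only [adjM, Matrix.of_apply]
    split_ifs <;> simp_all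
  have stepR : ∀ w : X, S.adjM F b y w * eB0 F S x w z
      = if S.r x w = S.r x z ∧ S.r w y = S.inv b then (S.k (S.r x z) : F)⁻¹ else 0 := by
    intro w
    rw [eB0_apply]
    simp only [adjM, Matrix.of_apply]
    have := S.r_flip b y w
    split_ifs <;> simp_all [S.r_flip b y w]
  rw [Finset.sum_congr rfl fun w _ => stepL w,
      Finset.sum_congr rfl fun w _ => stepR w,
      sum_ite_card, sum_ite_card]
  have hL : (Finset.univ.filter fun w : X => S.r x w = S.r x y ∧ S.r w z = b).card
      = S.p (S.r x y) b (S.r x z) := S.card_p (S.r x y) b x z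
  have hR : (Finset.univ.filter fun w : X => S.r x w = S.r x z ∧ S.r w y = S.inv b).card
      = S.p (S.r x z) (S.inv b) (S.r x y) := S.card_p (S.r x z) (S.inv b) x y
  rw [hL, hR, mul_comm ((S.p (S.r x y) b (S.r x z) : F)) _,
      mul_comm ((S.p (S.r x z) (S.inv b) (S.r x y) : F)) _]
  exact S.key_field p hk (S.r x y) b (S.r x z)

lemma eB0_comm_dualIdem (a : Fin (d + 1)) :
    eB0 F S x * S.dualIdem F x a = S.dualIdem F x a * eB0 F S x := by
  ext y z
  rw [Matrix.mul_apply, Matrix.mul_apply]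
  have stepL : ∀ w : X, eB0 F S x y w * S.dualIdem F x a w z
      = if w = z then (if S.r x y = S.r x z ∧ S.r x z = a
          then (S.k (S.r x y) : F)⁻¹ else 0) else 0 := by
    intro w
    rw [eB0_apply]
    simp only [dualIdem, Matrix.of_apply]
    split_ifs <;> subst_vars <;> simp_all
  have stepR : ∀ w : X, S.dualIdem F x a y w * eB0 F S x w z
      = if y = w then (if S.r x y = S.r x z ∧ S.r x z = a
          then (S.k (S.r x y) : F)⁻¹ else 0) else 0 := by
    intro w
    rw [eB0_apply]
    simp only [dualIdem, Matrix.of_apply]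
    split_ifs <;> subst_vars <;> simp_all
  rw [Finset.sum_congr rfl fun w _ => stepL w,
      Finset.sum_congr rfl fun w _ => stepR w,
      Finset.sum_ite_eq' Finset.univ z, Finset.sum_ite_eq Finset.univ y]
  simp

end Aux

theorem eB0_identity_and_central (p : ℕ) [Fact p.Prime] [CharP F p]
    (S : AssocScheme X d) (x : X) (hk : ∀ i : Fin (d + 1), ¬ p ∣ S.k i) :
    eB0 F S x ∈ B0 F S x ∧
    (∀ b ∈ B0 F S x, eB0 F S x * b = b ∧ b * eB0 F S x = b) ∧
    ∀ Z ∈ S.terw F x, eB0 F S x * Z = Z * eB0 F S x := by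
  have hmem : eB0 F S x ∈ B0 F S x := by
    refine Submodule.sum_mem _ fun i _ => Submodule.smul_mem _ _ ?_
    exact Submodule.subset_span ⟨(i, i), rfl⟩
  refine ⟨hmem, ?_, ?_⟩
  · intro b hb
    induction hb using Submodule.span_induction with
    | mem z hz =>
      obtain ⟨⟨i, j⟩, rfl⟩ := hz
      exact ⟨S.eB0_mul_EJE x p hk i j, S.EJE_mul_eB0 x p hk i j⟩
    | zero => simp
    | add u v _ _ hu hv => exact ⟨by rw [mul_add, hu.1, hv.1], by rw [add_mul, hu.2, hv.2]⟩
    | smul c u _ hu =>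
      exact ⟨by rw [mul_smul_comm, hu.1], by rw [smul_mul_assoc, hu.2]⟩
  · intro Z hZ
    induction hZ using Algebra.adjoin_induction with
    | mem z hz =>
      rcases hz with ⟨b, rfl⟩ | ⟨a, rfl⟩
      · exact S.eB0_comm_adjM x p hk b
      · exact S.eB0_comm_dualIdem x a
    | algebraMap c => exact (Algebra.commutes c (eB0 F S x)).symm
    | add u v _ _ hu hv => rw [mul_add, add_mul, hu, hv]
    | mul u v _ _ hu hv => rw [← mul_assoc, hu, mul_assoc, hv, mul_assoc]


end AssocScheme
end

section
/- S is a p'-valenced scheme if and only if for every Z in the annihilator Ann_T(W_0) of the primary module, E_i^* Z = Z E_i^* = O for all indices i with k_i = 1. -/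
open Matrix

namespace AssocScheme

variable {X : Type*} [Fintype X] [DecidableEq X] {d : ℕ}

variable (F : Type*) [Field F]

/-!
`W0` consists of the vectors that are constant on the spheres `{y | r x y = i}`, and the
vectors `E_i^* 𝟏` form an orthogonal basis of it with `E_i^* 𝟏 ⬝ᵥ E_i^* 𝟏 = k_i`. If no `k_i`
vanishes in `F`, the dot product is thus nondegenerate on `W0`; as `T` is closed under
transposition and stabilizes `W0`, any `Z ∈ T` annihilating `W0` has `Zᵀ` annihilating `W0`
as well. For a thin relation `R_i`, `E_i^* 𝟏` is a standard basis vector `e_y`, and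
`Z e_y = Zᵀ e_y = 0` kills column and row `y` of `Z`. Conversely, if `p ∣ k_a` then `J E_a^*`
annihilates `W0`, since it maps `E_a^* 𝟏` to `k_a 𝟏 = 0`, yet its row `x` is nonzero.
-/

section

open Finset

variable (S : AssocScheme X d)

theorem r_self (w : X) : S.r w w = 0 := (S.r_diag w w).mpr rfl

theorem inv_involutive : Function.Involutive S.inv := by
  intro i
  obtain ⟨a, b, rfl⟩ := S.surj i
  rw [← S.r_symm, ← S.r_symm]

theorem r_eq_inv_iff {y z : X} {j : Fin (d + 1)} : S.r z y = S.inv j ↔ S.r y z = j := by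
  rw [S.r_symm y z, S.inv_involutive.injective.eq_iff]

theorem card_sphere (w : X) (i : Fin (d + 1)) :
    (univ.filter fun z => S.r w z = i).card = S.k i := by
  rw [k, ← S.r_self w, ← S.card_p]
  congr 1
  ext z
  simp only [mem_filter, mem_univ, true_and, S.r_eq_inv_iff, and_self]

theorem exists_r_eq (w : X) (i : Fin (d + 1)) : ∃ z, S.r w z = i := by
  obtain ⟨a, b, hab⟩ := S.surj i
  have : 0 < (univ.filter fun z => S.r w z = i).card := by
    rw [S.card_sphere, ← S.card_sphere a]
    exact card_pos.mpr ⟨b, by simp [hab]⟩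
  obtain ⟨z, hz⟩ := card_pos.mp this
  exact ⟨z, (mem_filter.mp hz).2⟩

theorem k_zero : S.k 0 = 1 := by
  obtain ⟨w, -, -⟩ := S.surj 0
  rw [← S.card_sphere w, card_eq_one]
  exact ⟨w, by ext z; simp [S.r_diag, eq_comm]⟩

theorem eq_of_k_eq_one {w y z : X} {i : Fin (d + 1)} (hk : S.k i = 1) (hy : S.r w y = i)
    (hz : S.r w z = i) : y = z :=
  card_le_one.mp (S.card_sphere w i ▸ hk.le) y (by simpa using hy) z (by simpa using hz)

variable {F} (x : X)

theorem adjM_mem_terw (j : Fin (d + 1)) : S.adjM F j ∈ S.terw F x :=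
  Algebra.subset_adjoin (Or.inl ⟨j, rfl⟩)

theorem dualIdem_mem_terw (i : Fin (d + 1)) : S.dualIdem F x i ∈ S.terw F x :=
  Algebra.subset_adjoin (Or.inr ⟨i, rfl⟩)

theorem dualIdem_eq_diagonal (i : Fin (d + 1)) :
    S.dualIdem F x i = diagonal fun y => if S.r x y = i then 1 else 0 := by
  ext y z
  by_cases h : y = z
  · subst h; simp [dualIdem]
  · simp [dualIdem, h]

theorem dualIdem_transpose (i : Fin (d + 1)) : (S.dualIdem F x i)ᵀ = S.dualIdem F x i := by
  rw [dualIdem_eq_diagonal, diagonal_transpose]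

theorem dualIdem_mulVec_comp (i : Fin (d + 1)) (c : Fin (d + 1) → F) :
    S.dualIdem F x i *ᵥ (c ∘ S.r x) = (fun ℓ => if ℓ = i then c ℓ else 0) ∘ S.r x := by
  ext y
  rw [dualIdem_eq_diagonal, mulVec_diagonal]
  by_cases h : S.r x y = i <;> simp [h]

theorem sum_sphere (i : Fin (d + 1)) (c : Fin (d + 1) → F) :
    ∑ y, (if S.r x y = i then c (S.r x y) else 0) = S.k i * c i := by
  rw [← sum_filter, sum_congr rfl fun y hy => by rw [(mem_filter.mp hy).2], sum_const,
    S.card_sphere, nsmul_eq_mul]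

theorem mem_W0_iff {v : X → F} : v ∈ S.W0 F x ↔ ∃ c : Fin (d + 1) → F, v = c ∘ S.r x := by
  have hspan : ∀ c : Fin (d + 1) → F,
      ∑ i, c i • S.dualIdem F x i *ᵥ (1 : X → F) = c ∘ S.r x := by
    intro c
    ext y
    rw [Finset.sum_apply, sum_eq_single (S.r x y)]
    · simp [dualIdem_eq_diagonal, mulVec_diagonal]
    · intro i _ hi
      simp [dualIdem_eq_diagonal, mulVec_diagonal, Ne.symm hi]
    · simp
  rw [W0, Submodule.mem_span_range_iff_exists_fun]
  simp only [hspan, eq_comm]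

theorem adjM_mulVec_comp (j : Fin (d + 1)) (c : Fin (d + 1) → F) :
    S.adjM F j *ᵥ (c ∘ S.r x) = (fun ℓ => ∑ i, c i * S.p i (S.inv j) ℓ) ∘ S.r x := by
  ext y
  simp only [mulVec, dotProduct, adjM, of_apply, Function.comp_apply, ite_mul, one_mul, zero_mul]
  rw [← sum_fiberwise univ (S.r x)]
  refine sum_congr rfl fun i _ => ?_
  rw [sum_filter, ← S.card_p, card_filter, Nat.cast_sum, mul_sum]
  refine sum_congr rfl fun z _ => ?_
  by_cases hi : S.r x z = i <;> by_cases hj : S.r y z = j <;> simp [hi, hj, S.r_eq_inv_iff]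

theorem mulVec_mem_W0 {M : Matrix X X F} (hM : M ∈ S.terw F x) {v : X → F}
    (hv : v ∈ S.W0 F x) : M *ᵥ v ∈ S.W0 F x := by
  induction hM using Algebra.adjoin_induction generalizing v with
  | mem M hM =>
    obtain ⟨c, rfl⟩ := (S.mem_W0_iff x).mp hv
    rcases hM with ⟨j, rfl⟩ | ⟨i, rfl⟩
    · exact (S.mem_W0_iff x).mpr ⟨_, S.adjM_mulVec_comp x j c⟩
    · exact (S.mem_W0_iff x).mpr ⟨_, S.dualIdem_mulVec_comp x i c⟩
  | algebraMap a =>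
    rw [Algebra.algebraMap_eq_smul_one, smul_mulVec, one_mulVec]
    exact Submodule.smul_mem _ a hv
  | add M N _ _ hM hN => exact add_mulVec M N v ▸ add_mem (hM hv) (hN hv)
  | mul M N _ _ hM hN => exact (mulVec_mulVec v M N) ▸ hM (hN hv)

theorem transpose_mem_terw {M : Matrix X X F} (hM : M ∈ S.terw F x) : Mᵀ ∈ S.terw F x := by
  induction hM using Algebra.adjoin_induction with
  | mem M hM =>
    rcases hM with ⟨j, rfl⟩ | ⟨i, rfl⟩
    · convert S.adjM_mem_terw x (S.inv j) using 1
      ext y z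
      simp [adjM, S.r_eq_inv_iff]
    · rw [dualIdem_transpose]
      exact S.dualIdem_mem_terw x i
  | algebraMap a =>
    rw [algebraMap_eq_diagonal, diagonal_transpose, ← algebraMap_eq_diagonal]
    exact Subalgebra.algebraMap_mem _ a
  | add M N _ _ hM hN => exact (transpose_add M N).symm ▸ add_mem hM hN
  | mul M N _ _ hM hN => exact (transpose_mul M N).symm ▸ mul_mem hN hM

theorem eq_zero_of_mem_W0_of_forall_dotProduct_eq_zero (hk : ∀ i, (S.k i : F) ≠ 0)
    {v : X → F} (hv : v ∈ S.W0 F x) (horth : ∀ w ∈ S.W0 F x, v ⬝ᵥ w = 0) : v = 0 := by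
  obtain ⟨c, rfl⟩ := (S.mem_W0_iff x).mp hv
  have hc : c = 0 := by
    ext i
    have h := horth _ ((S.mem_W0_iff x).mpr ⟨fun ℓ => if ℓ = i then 1 else 0, rfl⟩)
    simp only [dotProduct, Function.comp_apply, mul_ite, mul_one, mul_zero] at h
    rw [S.sum_sphere x] at h
    exact (mul_eq_zero.mp h).resolve_left (hk i)
  rw [hc]
  rfl

theorem transpose_mulVec_eq_zero (hk : ∀ i, (S.k i : F) ≠ 0) {Z : Matrix X X F}
    (hZ : Z ∈ S.terw F x) (hann : ∀ v ∈ S.W0 F x, Z *ᵥ v = 0) {w : X → F}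
    (hw : w ∈ S.W0 F x) : Zᵀ *ᵥ w = 0 := by
  refine S.eq_zero_of_mem_W0_of_forall_dotProduct_eq_zero x hk
    (S.mulVec_mem_W0 x (S.transpose_mem_terw x hZ) hw) fun v hv => ?_
  rw [mulVec_transpose, ← dotProduct_mulVec, hann v hv, dotProduct_zero]

theorem mul_dualIdem_eq_zero {Z : Matrix X X F} (hann : ∀ v ∈ S.W0 F x, Z *ᵥ v = 0)
    {i : Fin (d + 1)} (hk : S.k i = 1) : Z * S.dualIdem F x i = 0 := by
  ext a b
  rw [dualIdem_eq_diagonal, mul_diagonal, Matrix.zero_apply]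
  split_ifs with hb
  · rw [mul_one]
    have h := congrFun (hann _ ((S.mem_W0_iff x).mpr ⟨fun ℓ => if ℓ = i then 1 else 0, rfl⟩)) a
    rwa [mulVec, dotProduct, sum_eq_single b, Function.comp_apply, if_pos hb, mul_one,
      Pi.zero_apply] at h
    · intro y _ hyb
      rw [Function.comp_apply, if_neg fun hy => hyb (S.eq_of_k_eq_one hk hy hb), mul_zero]
    · simp
  · rw [mul_zero]

theorem Jmat_mem_terw : Jmat F ∈ S.terw F x := by
  have : Jmat F = ∑ j, S.adjM F j := by
    ext y z
    simp [Jmat, adjM, Matrix.sum_apply]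
  rw [this]
  exact Subalgebra.sum_mem _ fun j _ => S.adjM_mem_terw x j

theorem Jmat_mul_dualIdem_mulVec_eq_zero {a : Fin (d + 1)} (hk : (S.k a : F) = 0)
    {v : X → F} (hv : v ∈ S.W0 F x) : (Jmat F * S.dualIdem F x a) *ᵥ v = 0 := by
  obtain ⟨c, rfl⟩ := (S.mem_W0_iff x).mp hv
  ext y
  rw [← mulVec_mulVec, S.dualIdem_mulVec_comp]
  simp only [mulVec, dotProduct, Jmat, of_apply, one_mul, Function.comp_apply]
  rw [S.sum_sphere x, hk, zero_mul, Pi.zero_apply]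

theorem dualIdem_zero_mul_Jmat_mul_dualIdem_ne_zero (a : Fin (d + 1)) :
    S.dualIdem F x 0 * (Jmat F * S.dualIdem F x a) ≠ 0 := by
  obtain ⟨z, hz⟩ := S.exists_r_eq x a
  intro h
  have := congrFun (congrFun h x) z
  simp [dualIdem_eq_diagonal, Jmat, S.r_self, hz] at this

end

theorem pprime_valenced_iff_annihilator_thin (p : ℕ) [CharP F p]
    (S : AssocScheme X d) (x : X) :
    (∀ i : Fin (d + 1), ¬ p ∣ S.k i) ↔
      ∀ Z ∈ S.terw F x, (∀ v ∈ S.W0 F x, Z *ᵥ v = 0) →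
        ∀ i : Fin (d + 1), S.k i = 1 →
          S.dualIdem F x i * Z = 0 ∧ Z * S.dualIdem F x i = 0 := by
  constructor
  · intro hp Z hZ hann i hi
    have hk : ∀ j, (S.k j : F) ≠ 0 := fun j h => hp j ((CharP.cast_eq_zero_iff F p _).mp h)
    refine ⟨?_, S.mul_dualIdem_eq_zero x hann hi⟩
    rw [← transpose_eq_zero, transpose_mul, dualIdem_transpose]
    exact S.mul_dualIdem_eq_zero x (fun w hw => S.transpose_mulVec_eq_zero x hk hZ hann hw) hi
  · intro H a ha
    have hka : (S.k a : F) = 0 := (CharP.cast_eq_zero_iff F p _).mpr ha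
    have hZ : Jmat F * S.dualIdem F x a ∈ S.terw F x :=
      mul_mem (S.Jmat_mem_terw x) (S.dualIdem_mem_terw x a)
    exact S.dualIdem_zero_mul_Jmat_mul_dualIdem_ne_zero x a
      (H _ hZ (fun v hv => S.Jmat_mul_dualIdem_mulVec_eq_zero x hka hv) 0 S.k_zero).1

end AssocScheme
end
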